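/- arXiv:2308.16329 — 8 statements merged into one kernel-verified Lean document; each statement's English description precedes it below -/
import Mathlib

section
/- Let n ≥ 1 be an integer, K ⊆ ℝⁿ a compact set, b : K → ℝ continuous, δ > 0, and I : ℝⁿ → ℝ any function. For w ∈ ℝⁿ and T > 0 set R_T(w) = {t ≥ 0 : √t·w ∈ K and t ≤ T + b(√t·w)}, and define f_T(u) = e^{−δT} e^{−I(u)/T} ∫_{R_T(u/√T)} e^{δt} dt. Then: (a) for every u in the topological interior of K, lim_{T→∞} f_T(u) = (1/δ) e^{δ b(u)}; and (b) for every u ∈ ℝⁿ \ K, lim_{T→∞} f_T(u) = 0. -/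
open MeasureTheory Real Filter Topology

lemma exp_int_formula (δ a c : ℝ) (hδ : δ ≠ 0) :
    ∫ t in a..c, Real.exp (δ * t) = (Real.exp (δ * c) - Real.exp (δ * a)) / δ := by
  rw [intervalIntegral.integral_comp_mul_left (fun x => Real.exp x) hδ,
    integral_exp, smul_eq_mul]
  field_simp

lemma sqrt_near_one {x : ℝ} (hx : 0 ≤ x) : |Real.sqrt x - 1| ≤ |x - 1| := by
  have h := Real.sq_sqrt hx
  have h2 := Real.sqrt_nonneg x
  rcases abs_cases (Real.sqrt x - 1) with ⟨e1, _⟩ | ⟨e1, _⟩ <;>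
    rcases abs_cases (x - 1) with ⟨e2, _⟩ | ⟨e2, _⟩ <;> nlinarith

lemma int_ub {δ A : ℝ} (hδ : 0 < δ) (hA : 0 ≤ A) (S : Set ℝ) (hS : S ⊆ Set.Icc 0 A) :
    ∫ t in S, Real.exp (δ * t) ≤ Real.exp (δ * A) / δ := by
  have hInt : IntegrableOn (fun t => Real.exp (δ * t)) (Set.Icc 0 A) :=
    (Real.continuous_exp.comp (continuous_const.mul continuous_id)).integrableOn_Icc
  have h1 : ∫ t in S, Real.exp (δ * t) ≤ ∫ t in Set.Icc 0 A, Real.exp (δ * t) :=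
    setIntegral_mono_set hInt (Eventually.of_forall fun t => (Real.exp_pos _).le)
      (HasSubset.Subset.eventuallyLE hS)
  have h2 : ∫ t in Set.Icc 0 A, Real.exp (δ * t) = (Real.exp (δ * A) - Real.exp (δ * 0)) / δ := by
    rw [MeasureTheory.integral_Icc_eq_integral_Ioc, ← intervalIntegral.integral_of_le hA,
      exp_int_formula _ _ _ hδ.ne']
  rw [h2] at h1
  have h0 : (0:ℝ) < Real.exp (δ * 0) := Real.exp_pos _
  have h3 : (Real.exp (δ * A) - Real.exp (δ * 0)) / δ ≤ Real.exp (δ * A) / δ := by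
    gcongr
    linarith
  linarith

lemma int_lb {δ a c A : ℝ} (hδ : 0 < δ) (S : Set ℝ) (h1 : Set.Icc a c ⊆ S)
    (hS : S ⊆ Set.Icc 0 A) (hac : a ≤ c) :
    (Real.exp (δ * c) - Real.exp (δ * a)) / δ ≤ ∫ t in S, Real.exp (δ * t) := by
  have hInt : IntegrableOn (fun t => Real.exp (δ * t)) (Set.Icc 0 A) :=
    (Real.continuous_exp.comp (continuous_const.mul continuous_id)).integrableOn_Icc
  have hIntS : IntegrableOn (fun t => Real.exp (δ * t)) S := hInt.mono_set hS
  have h2 : ∫ t in Set.Icc a c, Real.exp (δ * t) ≤ ∫ t in S, Real.exp (δ * t) :=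
    setIntegral_mono_set hIntS (Eventually.of_forall fun t => (Real.exp_pos _).le)
      (HasSubset.Subset.eventuallyLE h1)
  have h3 : ∫ t in Set.Icc a c, Real.exp (δ * t) = (Real.exp (δ * c) - Real.exp (δ * a)) / δ := by
    rw [MeasureTheory.integral_Icc_eq_integral_Ioc, ← intervalIntegral.integral_of_le hac,
      exp_int_formula _ _ _ hδ.ne']
  linarith

lemma aux_squeeze {g lo hi : ℝ → ℝ} {L : ℝ}
    (hlo : Tendsto lo (𝓝[>] (0:ℝ)) (𝓝 L)) (hhi : Tendsto hi (𝓝[>] (0:ℝ)) (𝓝 L))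
    (h : ∀ ε ∈ Set.Ioo (0:ℝ) 1, ∀ᶠ T in atTop, lo ε ≤ g T ∧ g T ≤ hi ε) :
    Tendsto g atTop (𝓝 L) := by
  rw [tendsto_order]
  constructor
  · intro a ha
    have h1 : ∀ᶠ ε in 𝓝[>] (0:ℝ), a < lo ε := hlo.eventually (eventually_gt_nhds ha)
    have h2 : ∀ᶠ ε in 𝓝[>] (0:ℝ), ε < 1 :=
      (eventually_lt_nhds one_pos).filter_mono nhdsWithin_le_nhds
    have h3 : ∀ᶠ ε in 𝓝[>] (0:ℝ), 0 < ε := self_mem_nhdsWithin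
    obtain ⟨ε, hε1, hε2, hε3⟩ := (h1.and (h2.and h3)).exists
    filter_upwards [h ε ⟨hε3, hε2⟩] with T hT
    exact lt_of_lt_of_le hε1 hT.1
  · intro a ha
    have h1 : ∀ᶠ ε in 𝓝[>] (0:ℝ), hi ε < a := hhi.eventually (eventually_lt_nhds ha)
    have h2 : ∀ᶠ ε in 𝓝[>] (0:ℝ), ε < 1 :=
      (eventually_lt_nhds one_pos).filter_mono nhdsWithin_le_nhds
    have h3 : ∀ᶠ ε in 𝓝[>] (0:ℝ), 0 < ε := self_mem_nhdsWithin
    obtain ⟨ε, hε1, hε2, hε3⟩ := (h1.and (h2.and h3)).exists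
    filter_upwards [h ε ⟨hε3, hε2⟩] with T hT
    exact lt_of_le_of_lt hT.2 hε1

lemma sigma_bound {t T : ℝ} (ht : 0 ≤ t) (hT : 0 < T) :
    |Real.sqrt t * (Real.sqrt T)⁻¹ - 1| ≤ |t / T - 1| := by
  have h1 : Real.sqrt t * (Real.sqrt T)⁻¹ = Real.sqrt (t / T) := by
    rw [Real.sqrt_div ht, div_eq_mul_inv]
  rw [h1]
  exact sqrt_near_one (div_nonneg ht hT.le)

lemma norm_smul_sub_self {n : ℕ} (σ : ℝ) (u : EuclideanSpace ℝ (Fin n)) :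
    ‖σ • u - u‖ = |σ - 1| * ‖u‖ := by
  rw [show σ • u - u = (σ - 1) • u by rw [sub_smul, one_smul], norm_smul, Real.norm_eq_abs]

set_option maxHeartbeats 1000000 in
/-- Pointwise limits of the fiber integrals `f_T` over the truncated-tube regions:
`(1/δ) e^{δ b(u)}` at interior points of `K`, and `0` outside `K`. -/
theorem stmt_1 (n : ℕ) (hn : 1 ≤ n)
    (K : Set (EuclideanSpace ℝ (Fin n))) (hK : IsCompact K)
    (b : EuclideanSpace ℝ (Fin n) → ℝ) (hb : ContinuousOn b K)
    (δ : ℝ) (hδ : 0 < δ)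
    (I : EuclideanSpace ℝ (Fin n) → ℝ)
    (R : ℝ → EuclideanSpace ℝ (Fin n) → Set ℝ)
    (hR : ∀ T w, R T w =
      {t : ℝ | 0 ≤ t ∧ Real.sqrt t • w ∈ K ∧ t ≤ T + b (Real.sqrt t • w)})
    (f : ℝ → EuclideanSpace ℝ (Fin n) → ℝ)
    (hf : ∀ T u, f T u = Real.exp (-(δ * T)) * Real.exp (-(I u) / T) *
      ∫ t in R T ((Real.sqrt T)⁻¹ • u), Real.exp (δ * t)) :
    (∀ u ∈ interior K,
      Tendsto (fun T => f T u) atTop (𝓝 ((1 / δ) * Real.exp (δ * b u)))) ∧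
    (∀ u, u ∉ K → Tendsto (fun T => f T u) atTop (𝓝 0)) := by
  obtain ⟨M, hM, hMnn⟩ : ∃ M : ℝ, (∀ x ∈ K, |b x| ≤ M) ∧ 0 ≤ M := by
    obtain ⟨M0, hM0⟩ := hK.exists_bound_of_continuousOn hb
    refine ⟨max M0 0, fun x hx => ?_, le_max_right _ _⟩
    have := hM0 x hx
    rw [Real.norm_eq_abs] at this
    exact this.trans (le_max_left _ _)
  have hIlim : ∀ u : EuclideanSpace ℝ (Fin n),
      Tendsto (fun T : ℝ => Real.exp (-(I u) / T)) atTop (𝓝 1) := by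
    intro u
    have h1 : Tendsto (fun T : ℝ => -(I u) / T) atTop (𝓝 0) :=
      tendsto_const_nhds.div_atTop tendsto_id
    have := (Real.continuous_exp.tendsto 0).comp h1
    rw [Real.exp_zero] at this; exact this
  constructor
  · -- interior case
    intro u hu
    have huK : u ∈ K := interior_subset hu
    have hbu : |b u| ≤ M := hM u huK
    obtain ⟨hbu1, hbu2⟩ := abs_le.mp hbu
    obtain ⟨η₁, hη₁, hball⟩ := Metric.isOpen_iff.mp isOpen_interior u hu
    have hballK : Metric.ball u η₁ ⊆ K := hball.trans interior_subset
    have hcw : ContinuousWithinAt b K u := hb u huK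
    rw [Metric.continuousWithinAt_iff] at hcw
    have hfeq : ∀ T : ℝ, f T u = Real.exp (-(I u) / T) *
        (Real.exp (-(δ * T)) * ∫ t in R T ((Real.sqrt T)⁻¹ • u), Real.exp (δ * t)) := by
      intro T; rw [hf]; ring
    have hglim : Tendsto
        (fun T => Real.exp (-(δ * T)) * ∫ t in R T ((Real.sqrt T)⁻¹ • u), Real.exp (δ * t))
        atTop (𝓝 ((1 / δ) * Real.exp (δ * b u))) := by
      have clo : Continuous (fun ε : ℝ => (Real.exp (δ * (b u - ε)) - ε) / δ) := by
        fun_prop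
      have chi : Continuous (fun ε : ℝ => Real.exp (δ * (b u + ε)) / δ) := by
        fun_prop
      have h0lo : (Real.exp (δ * (b u - 0)) - 0) / δ = (1 / δ) * Real.exp (δ * b u) := by
        rw [sub_zero, sub_zero]; ring
      have h0hi : Real.exp (δ * (b u + 0)) / δ = (1 / δ) * Real.exp (δ * b u) := by
        rw [add_zero]; ring
      refine aux_squeeze (h0lo ▸ (clo.tendsto 0).mono_left nhdsWithin_le_nhds)
        (h0hi ▸ (chi.tendsto 0).mono_left nhdsWithin_le_nhds) ?_
      rintro ε ⟨hε0, hε1⟩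
      obtain ⟨η, hη, hbc⟩ := hcw ε hε0
      obtain ⟨η', hη', hη'1, hη'2⟩ : ∃ η' : ℝ, 0 < η' ∧ η' ≤ η ∧ η' ≤ η₁ :=
        ⟨min η η₁, lt_min hη hη₁, min_le_left _ _, min_le_right _ _⟩
      obtain ⟨c, hc1, hexpc⟩ : ∃ c : ℝ, M + 1 ≤ c ∧ Real.exp (-(δ * c)) ≤ ε := by
        have hlog : 0 ≤ Real.log (1 / ε) := Real.log_nonneg (one_le_one_div hε0 hε1.le)
        refine ⟨M + 1 + Real.log (1 / ε) / δ, by nlinarith [div_nonneg hlog hδ.le], ?_⟩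
        have hc' : δ * (M + 1 + Real.log (1 / ε) / δ) = δ * (M + 1) + Real.log (1 / ε) := by
          field_simp
          try ring
        have hli : Real.log (1 / ε) = -Real.log ε := by rw [one_div, Real.log_inv]
        have h1 : -(δ * (M + 1 + Real.log (1 / ε) / δ)) ≤ Real.log ε := by
          have := mul_nonneg hδ.le (by linarith : (0:ℝ) ≤ M + 1)
          rw [hc', hli]; linarith
        calc Real.exp (-(δ * (M + 1 + Real.log (1 / ε) / δ))) ≤ Real.exp (Real.log ε) :=
            Real.exp_le_exp.mpr h1
          _ = ε := Real.exp_log hε0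
      obtain ⟨D, hDdef, hD⟩ : ∃ D : ℝ, D = c + M ∧ 0 ≤ D := ⟨c + M, rfl, by linarith⟩
      filter_upwards [eventually_ge_atTop (c + 1), eventually_gt_atTop (D * ‖u‖ / η'),
        eventually_ge_atTop 1] with T hTc hTD hT1
      have hT0 : (0:ℝ) < T := by linarith
      have hDT : D * ‖u‖ / T < η' := by
        rw [div_lt_iff₀ hT0]
        rw [div_lt_iff₀ hη'] at hTD
        calc D * ‖u‖ < T * η' := hTD
          _ = η' * T := mul_comm _ _
      have hnear : ∀ t : ℝ, T - c ≤ t → t ≤ T + M →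
          dist ((Real.sqrt t * (Real.sqrt T)⁻¹) • u) u < η' := by
        intro t h1 h2
        have ht0 : (0:ℝ) ≤ t := by linarith
        have habs : |t / T - 1| ≤ D / T := by
          have h3 : t / T - 1 = (t - T) / T := by field_simp
          rw [h3, abs_div, abs_of_pos hT0]
          have : |t - T| ≤ D := abs_le.mpr ⟨by linarith, by linarith⟩
          exact div_le_div_of_nonneg_right this hT0.le
        have hσ := (sigma_bound ht0 hT0).trans habs
        rw [dist_eq_norm, norm_smul_sub_self]
        calc |Real.sqrt t * (Real.sqrt T)⁻¹ - 1| * ‖u‖ ≤ D / T * ‖u‖ :=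
              mul_le_mul_of_nonneg_right hσ (norm_nonneg _)
          _ = D * ‖u‖ / T := by ring
          _ < η' := hDT
      have hsubU : R T ((Real.sqrt T)⁻¹ • u) ⊆ Set.Icc 0 (T + (b u + ε)) := by
        intro t ht
        rw [hR] at ht
        obtain ⟨ht0, htK, htle⟩ := ht
        rw [smul_smul] at htK htle
        refine ⟨ht0, ?_⟩
        by_cases h : T - c ≤ t
        · have hbx := abs_le.mp (hM _ htK)
          have h2 : t ≤ T + M := by linarith [hbx.2]
          have hdist := hnear t h h2
          have := hbc htK (lt_of_lt_of_le hdist hη'1)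
          rw [Real.dist_eq] at this
          have := (abs_le.mp this.le).2
          linarith
        · linarith
      have hsubL : Set.Icc (T - c) (T + (b u - ε)) ⊆ R T ((Real.sqrt T)⁻¹ • u) := by
        intro t ⟨h1, h2⟩
        have ht0 : (0:ℝ) ≤ t := by linarith
        have h3 : t ≤ T + M := by linarith
        have hdist := hnear t h1 h3
        have hxK : (Real.sqrt t * (Real.sqrt T)⁻¹) • u ∈ K :=
          hballK (Metric.mem_ball.mpr (lt_of_lt_of_le hdist hη'2))
        have hbx := hbc hxK (lt_of_lt_of_le hdist hη'1)
        rw [Real.dist_eq] at hbx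
        have hbx2 := (abs_le.mp hbx.le).1
        rw [hR]
        refine ⟨ht0, ?_, ?_⟩ <;> rw [smul_smul]
        · exact hxK
        · linarith
      have hA : (0:ℝ) ≤ T + (b u + ε) := by linarith
      have hac : T - c ≤ T + (b u - ε) := by linarith
      have hJub := int_ub hδ hA _ hsubU
      have hJlb := int_lb hδ _ hsubL hsubU hac
      have hexppos : (0:ℝ) ≤ Real.exp (-(δ * T)) := (Real.exp_pos _).le
      constructor
      · -- lower bound
        have h1 : Real.exp (-(δ * T)) *
            ((Real.exp (δ * (T + (b u - ε))) - Real.exp (δ * (T - c))) / δ) ≤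
            Real.exp (-(δ * T)) * ∫ t in R T ((Real.sqrt T)⁻¹ • u), Real.exp (δ * t) :=
          mul_le_mul_of_nonneg_left hJlb hexppos
        have e1 : Real.exp (-(δ * T)) * Real.exp (δ * (T + (b u - ε))) =
            Real.exp (δ * (b u - ε)) := by rw [← Real.exp_add]; congr 1; ring
        have e2 : Real.exp (-(δ * T)) * Real.exp (δ * (T - c)) = Real.exp (-(δ * c)) := by
          rw [← Real.exp_add]; congr 1; ring
        have h2 : Real.exp (-(δ * T)) *
            ((Real.exp (δ * (T + (b u - ε))) - Real.exp (δ * (T - c))) / δ) =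
            (Real.exp (δ * (b u - ε)) - Real.exp (-(δ * c))) / δ := by
          rw [mul_div_assoc', mul_sub, e1, e2]
        have h3 : (Real.exp (δ * (b u - ε)) - ε) / δ ≤
            (Real.exp (δ * (b u - ε)) - Real.exp (-(δ * c))) / δ := by
          gcongr
        rw [h2] at h1
        linarith
      · -- upper bound
        have h1 : Real.exp (-(δ * T)) *
            (∫ t in R T ((Real.sqrt T)⁻¹ • u), Real.exp (δ * t)) ≤
            Real.exp (-(δ * T)) * (Real.exp (δ * (T + (b u + ε))) / δ) :=
          mul_le_mul_of_nonneg_left hJub hexppos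
        have e1 : Real.exp (-(δ * T)) * Real.exp (δ * (T + (b u + ε))) =
            Real.exp (δ * (b u + ε)) := by rw [← Real.exp_add]; congr 1; ring
        have h2 : Real.exp (-(δ * T)) * (Real.exp (δ * (T + (b u + ε))) / δ) =
            Real.exp (δ * (b u + ε)) / δ := by rw [mul_div_assoc', e1]
        rw [h2] at h1
        exact h1
    have := (hIlim u).mul hglim
    rw [one_mul] at this
    exact Tendsto.congr (fun T => (hfeq T).symm) this
  · -- exterior case
    intro u hu
    have hfeq : ∀ T : ℝ, f T u = Real.exp (-(I u) / T) *
        (Real.exp (-(δ * T)) * ∫ t in R T ((Real.sqrt T)⁻¹ • u), Real.exp (δ * t)) := by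
      intro T; rw [hf]; ring
    rcases eq_or_ne u 0 with h0 | h0
    · have hzero : ∀ T : ℝ, f T u = 0 := by
        intro T
        have hRe : R T ((Real.sqrt T)⁻¹ • u) = ∅ := by
          rw [hR]
          ext t
          simp only [Set.mem_setOf_eq, Set.mem_empty_iff_false, iff_false, not_and]
          intro _ hmem
          rw [h0, smul_zero, smul_zero] at hmem
          exact absurd hmem (h0 ▸ hu)
        rw [hf, hRe]
        simp
      exact Tendsto.congr (fun T => (hzero T).symm) tendsto_const_nhds
    · obtain ⟨r, hr, hrball⟩ := Metric.isOpen_iff.mp hK.isClosed.isOpen_compl u hu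
      have hu0 : (0:ℝ) < ‖u‖ := norm_pos_iff.mpr h0
      obtain ⟨ρ, hρ0, hρ1, hkey⟩ : ∃ ρ : ℝ, 0 < ρ ∧ ρ ≤ 1 / 2 ∧
          ∀ s : ℝ, s • u ∈ K → ρ ≤ |s - 1| := by
        refine ⟨min (r / ‖u‖) (1 / 2), lt_min (div_pos hr hu0) (by norm_num),
          min_le_right _ _, ?_⟩
        intro s hmem
        have h1 : s • u ∉ Metric.ball u r := fun h => (hrball h) hmem
        have h2 : r ≤ dist (s • u) u := not_lt.mp (fun h => h1 (Metric.mem_ball.mpr h))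
        rw [dist_eq_norm, norm_smul_sub_self] at h2
        have h3 : r / ‖u‖ ≤ |s - 1| := (div_le_iff₀ hu0).mpr (by linarith [mul_comm (|s - 1|) ‖u‖])
        exact (min_le_left _ _).trans h3
      have hglim : Tendsto
          (fun T => Real.exp (-(δ * T)) * ∫ t in R T ((Real.sqrt T)⁻¹ • u), Real.exp (δ * t))
          atTop (𝓝 0) := by
        have hg0 : ∀ T : ℝ, 0 ≤ Real.exp (-(δ * T)) *
            ∫ t in R T ((Real.sqrt T)⁻¹ • u), Real.exp (δ * t) :=
          fun T => mul_nonneg (Real.exp_pos _).le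
            (integral_nonneg fun t => (Real.exp_pos _).le)
        have hub : ∀ᶠ T in atTop, Real.exp (-(δ * T)) *
            (∫ t in R T ((Real.sqrt T)⁻¹ • u), Real.exp (δ * t)) ≤
            Real.exp (-(δ * ρ * T)) / δ := by
          filter_upwards [eventually_gt_atTop (0:ℝ), eventually_gt_atTop (M / (2 * ρ))]
            with T hT0 hTM
          have hTM' : M < 2 * ρ * T := by
            rw [div_lt_iff₀ (by positivity : (0:ℝ) < 2 * ρ)] at hTM
            linarith [mul_comm T (2 * ρ)]
          have hsub : R T ((Real.sqrt T)⁻¹ • u) ⊆ Set.Icc 0 (T * (1 - ρ)) := by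
            intro t ht
            rw [hR] at ht
            obtain ⟨ht0, htK, htle⟩ := ht
            rw [smul_smul] at htK htle
            obtain ⟨σ, hσeq, hσ0, hσ2⟩ : ∃ σ : ℝ, Real.sqrt t * (Real.sqrt T)⁻¹ = σ ∧
                0 ≤ σ ∧ σ ^ 2 = t / T := by
              refine ⟨Real.sqrt t * (Real.sqrt T)⁻¹, rfl,
                mul_nonneg (Real.sqrt_nonneg _) (inv_nonneg.mpr (Real.sqrt_nonneg _)), ?_⟩
              rw [show Real.sqrt t * (Real.sqrt T)⁻¹ = Real.sqrt (t / T) by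
                rw [Real.sqrt_div ht0, div_eq_mul_inv]]
              exact Real.sq_sqrt (div_nonneg ht0 hT0.le)
            rw [hσeq] at htK htle
            have hbx := (abs_le.mp (hM _ htK)).2
            have hρσ := hkey σ htK
            rcases le_abs.mp hρσ with h | h
            · -- σ ≥ 1 + ρ : contradiction
              exfalso
              have hσge : 1 + ρ ≤ σ := by linarith
              have h1 : (1 + ρ) ^ 2 ≤ t / T := by
                rw [← hσ2]; nlinarith
              have h2 : (1 + ρ) ^ 2 * T ≤ t := (le_div_iff₀ hT0).mp h1
              nlinarith [mul_nonneg (sq_nonneg ρ) hT0.le]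
            · -- σ ≤ 1 - ρ
              have hσle : σ ≤ 1 - ρ := by linarith
              have h1 : t / T ≤ (1 - ρ) ^ 2 := by
                rw [← hσ2]; nlinarith
              have h2 : t ≤ (1 - ρ) ^ 2 * T := (div_le_iff₀ hT0).mp h1
              refine ⟨ht0, ?_⟩
              nlinarith [mul_nonneg (mul_nonneg hρ0.le (by linarith : (0:ℝ) ≤ 1 - ρ)) hT0.le]
          have hA : (0:ℝ) ≤ T * (1 - ρ) := by nlinarith
          have hJub := int_ub hδ hA _ hsub
          have h1 := mul_le_mul_of_nonneg_left hJub (Real.exp_pos (-(δ * T))).le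
          have e1 : Real.exp (-(δ * T)) * Real.exp (δ * (T * (1 - ρ))) =
              Real.exp (-(δ * ρ * T)) := by rw [← Real.exp_add]; congr 1; ring
          have h2 : Real.exp (-(δ * T)) * (Real.exp (δ * (T * (1 - ρ))) / δ) =
              Real.exp (-(δ * ρ * T)) / δ := by rw [mul_div_assoc', e1]
          rw [h2] at h1
          exact h1
        have hlim0 : Tendsto (fun T : ℝ => Real.exp (-(δ * ρ * T)) / δ) atTop (𝓝 0) := by
          have h1 : Tendsto (fun T : ℝ => δ * ρ * T) atTop atTop :=
            Tendsto.const_mul_atTop (by positivity) tendsto_id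
          have h2 : Tendsto (fun T : ℝ => -(δ * ρ * T)) atTop atBot :=
            tendsto_neg_atBot_iff.mpr h1
          have h3 := Real.tendsto_exp_atBot.comp h2
          simpa using h3.div_const δ
        exact squeeze_zero' (Eventually.of_forall hg0) hub hlim0
      have := (hIlim u).mul hglim
      rw [mul_zero] at this
      exact Tendsto.congr (fun T => (hfeq T).symm) this
end

section
/- Let n ≥ 1 be an integer, K ⊆ ℝⁿ a compact set, and b : K → ℝ continuous. For w ∈ ℝⁿ and T > 0 set R_T(w) = {t ≥ 0 : √t·w ∈ K and t ≤ T + b(√t·w)}. Fix u in the topological interior of K and let s_u = sup({s ∈ [0,1] : s·u ∉ K} ∪ {0}). Then: (i) s_u < 1; and (ii) for every ε > 0 and every s′ with s_u < s′ < 1 there exists T₁ > 0 such that for all T ≥ T₁ one has the inclusions [s′T, T + b(u) − ε] ⊆ R_T(u/√T) and R_T(u/√T) ⊆ [0, T + b(u) + ε]. -/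
open MeasureTheory Real Filter Topology

set_option maxHeartbeats 1000000 in
/-- For `u` in the interior of `K`: `s_u < 1`, and the truncated-tube fiber
`R_T(u/√T)` is squeezed between `[s'T, T + b(u) - ε]` and `[0, T + b(u) + ε]`
for all large `T`. -/
theorem stmt_2 (n : ℕ) (hn : 1 ≤ n)
    (K : Set (EuclideanSpace ℝ (Fin n))) (hK : IsCompact K)
    (b : EuclideanSpace ℝ (Fin n) → ℝ) (hb : ContinuousOn b K)
    (R : ℝ → EuclideanSpace ℝ (Fin n) → Set ℝ)
    (hR : ∀ T w, R T w =
      {t : ℝ | 0 ≤ t ∧ Real.sqrt t • w ∈ K ∧ t ≤ T + b (Real.sqrt t • w)})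
    (u : EuclideanSpace ℝ (Fin n)) (hu : u ∈ interior K)
    (s_u : ℝ)
    (hs : s_u = sSup ({s ∈ Set.Icc (0 : ℝ) 1 | s • u ∉ K} ∪ {0})) :
    s_u < 1 ∧
    ∀ ε > 0, ∀ s' : ℝ, s_u < s' → s' < 1 →
      ∃ T₁ > 0, ∀ T ≥ T₁,
        Set.Icc (s' * T) (T + b u - ε) ⊆ R T ((Real.sqrt T)⁻¹ • u) ∧
        R T ((Real.sqrt T)⁻¹ • u) ⊆ Set.Icc 0 (T + b u + ε) := by
  have uK : u ∈ K := interior_subset hu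
  obtain ⟨δ₁, hδ₁pos, hball₀⟩ := Metric.isOpen_iff.1 isOpen_interior u hu
  have hball : Metric.ball u δ₁ ⊆ K := hball₀.trans interior_subset
  set S := ({s ∈ Set.Icc (0 : ℝ) 1 | s • u ∉ K} ∪ {0} : Set ℝ) with hSdef
  have hbdd : BddAbove S := by
    refine ⟨1, ?_⟩
    rintro x (⟨⟨h0, h1⟩, _⟩ | rfl)
    · exact h1
    · exact zero_le_one
  have h0S : (0 : ℝ) ∈ S := Or.inr rfl
  have hsu0 : 0 ≤ s_u := hs ▸ le_csSup hbdd h0S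
  have hKs : ∀ s : ℝ, s_u < s → s ≤ 1 → s • u ∈ K := by
    intro s hlt hle
    by_contra hnot
    have hxS : s ∈ S := Or.inl ⟨⟨le_of_lt (lt_of_le_of_lt hsu0 hlt), hle⟩, hnot⟩
    exact absurd hlt (not_lt.2 (hs ▸ le_csSup hbdd hxS))
  have hunorm : (0:ℝ) < ‖u‖ + 1 := by positivity
  have hsmul_sub : ∀ x : ℝ, x • u - u = (x - 1) • u := by
    intro x; rw [sub_smul, one_smul]
  have hsu1 : s_u < 1 := by
    have hc : max 0 (1 - δ₁ / (‖u‖ + 1)) < 1 := by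
      have : 0 < δ₁ / (‖u‖ + 1) := by positivity
      apply max_lt one_pos (by linarith)
    refine lt_of_le_of_lt ?_ hc
    rw [hs]
    apply csSup_le ⟨0, h0S⟩
    rintro x (⟨⟨h0, h1⟩, hxK⟩ | rfl)
    · refine le_trans ?_ (le_max_right _ _)
      by_contra h
      push_neg at h
      apply hxK
      apply hball
      rw [Metric.mem_ball, dist_eq_norm, hsmul_sub, norm_smul, Real.norm_eq_abs,
        abs_of_nonpos (by linarith)]
      have h1x : (1 - x) * (‖u‖ + 1) < δ₁ := (lt_div_iff₀ hunorm).1 (by linarith)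
      nlinarith [norm_nonneg u]
    · exact le_max_left _ _
  refine ⟨hsu1, ?_⟩
  intro ε hε s' hs' hs'1
  obtain ⟨C, hC⟩ := hK.exists_bound_of_continuousOn hb
  set M := max C 1 with hMdef
  have hM1 : (1:ℝ) ≤ M := le_max_right _ _
  have hMb : ∀ x ∈ K, |b x| ≤ M := by
    intro x hx
    exact le_trans (by simpa [Real.norm_eq_abs] using hC x hx) (le_max_left _ _)
  obtain ⟨δ₂, hδ₂pos, hδ₂⟩ := Metric.continuousWithinAt_iff.1 (hb u uK) ε hε
  set δ := min δ₁ δ₂ with hδdef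
  have hδpos : 0 < δ := lt_min hδ₁pos hδ₂pos
  set η := min (1/2 : ℝ) (δ / (2 * (‖u‖ + 1))) with hηdef
  have hηpos : 0 < η := lt_min (by norm_num) (by positivity)
  have hη2 : η ≤ 1/2 := min_le_left _ _
  have hηδ : η * ‖u‖ < δ := by
    have h1 : η ≤ δ / (2 * (‖u‖ + 1)) := min_le_right _ _
    have h2 : η * ‖u‖ ≤ δ / (2 * (‖u‖ + 1)) * ‖u‖ :=
      mul_le_mul_of_nonneg_right h1 (norm_nonneg u)
    have h3 : δ / (2 * (‖u‖ + 1)) * ‖u‖ < δ := by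
      rw [div_mul_eq_mul_div, div_lt_iff₀ (by positivity)]
      nlinarith [norm_nonneg u]
    linarith
  have hnear : ∀ s : ℝ, |s - 1| ≤ η → s • u ∈ K ∧ |b (s • u) - b u| < ε := by
    intro s hsη
    have hd : dist (s • u) u < δ := by
      rw [dist_eq_norm, hsmul_sub, norm_smul, Real.norm_eq_abs]
      calc |s - 1| * ‖u‖ ≤ η * ‖u‖ := mul_le_mul_of_nonneg_right hsη (norm_nonneg u)
        _ < δ := hηδ
    have hmem : s • u ∈ K := hball (Metric.mem_ball.2 (lt_of_lt_of_le hd (min_le_left _ _)))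
    refine ⟨hmem, ?_⟩
    have := hδ₂ hmem (lt_of_lt_of_le hd (min_le_right _ _))
    rwa [Real.dist_eq] at this
  refine ⟨M / η, by positivity, ?_⟩
  intro T hT
  have hTpos : 0 < T := lt_of_lt_of_le (by positivity) hT
  have hηT : M ≤ η * T := by
    rw [ge_iff_le, div_le_iff₀ hηpos] at hT; linarith
  have hMpos : (0:ℝ) < M := by linarith
  have hMT : M ≤ T := by
    nlinarith [mul_nonneg (by linarith : (0:ℝ) ≤ 1/2 - η) hTpos.le]
  have hsmul : ∀ t : ℝ, 0 ≤ t →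
      Real.sqrt t • ((Real.sqrt T)⁻¹ • u) = Real.sqrt (t / T) • u := by
    intro t ht
    rw [smul_smul, Real.sqrt_div ht, div_eq_mul_inv]
  have hs'pos : 0 < s' := lt_of_le_of_lt hsu0 hs'
  have hbuM : |b u| ≤ M := hMb u uK
  have habu := abs_le.1 hbuM
  have hη2T : η ^ 2 * T ≤ η * T :=
    mul_le_mul_of_nonneg_right (by nlinarith) hTpos.le
  constructor
  · -- lower inclusion
    intro t ht
    obtain ⟨ht1, ht2⟩ := ht
    have ht0 : 0 ≤ t := le_trans (by positivity) ht1
    set s := Real.sqrt (t / T) with hsdef2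
    have hs0 : 0 ≤ s := Real.sqrt_nonneg _
    have hssq : s ^ 2 = t / T := Real.sq_sqrt (by positivity)
    have hts : t = s ^ 2 * T := by
      rw [hssq]; field_simp
    have hsl : Real.sqrt s' ≤ s :=
      Real.sqrt_le_sqrt ((le_div_iff₀ hTpos).2 (by linarith))
    have hsu_lt : s_u < s := by
      refine lt_of_lt_of_le (lt_of_lt_of_le hs' ?_) hsl
      exact Real.le_sqrt_of_sq_le (by nlinarith)
    have htM : t ≤ T + M := by linarith
    have hsub : s ≤ 1 + η := by
      rw [hsdef2, Real.sqrt_le_left (by positivity)]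
      rw [div_le_iff₀ hTpos]
      nlinarith [mul_nonneg (mul_nonneg hηpos.le hηpos.le) hTpos.le]
    rw [hR]
    refine ⟨ht0, ?_, ?_⟩ <;> rw [hsmul t ht0]
    · by_cases hcase : 1 - η ≤ s
      · exact (hnear s (abs_le.2 ⟨by linarith, by linarith⟩)).1
      · push_neg at hcase
        exact hKs s hsu_lt (by linarith)
    · by_cases hcase : 1 - η ≤ s
      · obtain ⟨_, hclose⟩ := hnear s (abs_le.2 ⟨by linarith, by linarith⟩)
        have := (abs_lt.1 hclose).1
        linarith
      · push_neg at hcase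
        have hmem : s • u ∈ K := hKs s hsu_lt (by linarith)
        have hbM := (abs_le.1 (hMb _ hmem)).1
        have hsq : s ^ 2 ≤ (1 - η) ^ 2 := by
          nlinarith [mul_nonneg (by linarith : (0:ℝ) ≤ 1 - η - s)
            (by linarith : (0:ℝ) ≤ 1 - η + s)]
        have := mul_le_mul_of_nonneg_right hsq hTpos.le
        nlinarith
  · -- upper inclusion
    intro t htR
    rw [hR] at htR
    obtain ⟨ht0, hmem, htle⟩ := htR
    rw [hsmul t ht0] at hmem htle
    refine ⟨ht0, ?_⟩
    by_contra h
    push_neg at h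
    set s := Real.sqrt (t / T) with hsdef2
    have hs0 : 0 ≤ s := Real.sqrt_nonneg _
    have hssq : s ^ 2 = t / T := Real.sq_sqrt (by positivity)
    have hts : t = s ^ 2 * T := by
      rw [hssq]; field_simp
    have hbM := abs_le.1 (hMb _ hmem)
    have htM : t ≤ T + M := by linarith [hbM.2]
    have hsub : s ≤ 1 + η := by
      rw [hsdef2, Real.sqrt_le_left (by positivity)]
      rw [div_le_iff₀ hTpos]
      nlinarith [mul_nonneg (mul_nonneg hηpos.le hηpos.le) hTpos.le]
    have hslb : 1 - η ≤ s := by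
      refine Real.le_sqrt_of_sq_le ?_
      rw [le_div_iff₀ hTpos]
      nlinarith
    obtain ⟨_, hclose⟩ := hnear s (abs_le.2 ⟨by linarith, by linarith⟩)
    have := (abs_lt.1 hclose).2
    linarith
end

section
/- Let n ≥ 1 be an integer, K ⊆ ℝⁿ a compact set, b : K → ℝ continuous, δ > 0, and Q : ℝⁿ → ℝ a positive definite quadratic form. For w ∈ ℝⁿ and T > 0 set R_T(w) = {t ≥ 0 : √t·w ∈ K and t ≤ T + b(√t·w)}, and define f_T(u) = e^{−δT} e^{−Q(u)/T} ∫_{R_T(u/√T)} e^{δt} dt. For u ∈ ℝⁿ set j_u = sup({s ∈ [0,1] : s·u ∈ K} ∪ {0}) and g(u) = 2√(δ · Q(u) · (1 − j_u²)). Then for every u not in the convex hull of K ∪ {0} and every T > 0, one has f_T(u) ≤ (1/δ) e^{−g(u)}. -/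
open MeasureTheory Real Filter Topology

/-- Exponential upper bound `f_T(u) ≤ (1/δ) e^{-g(u)}` outside the convex hull
of `K ∪ {0}`. -/
theorem stmt_3 (n : ℕ) (hn : 1 ≤ n)
    (K : Set (EuclideanSpace ℝ (Fin n))) (hK : IsCompact K)
    (b : EuclideanSpace ℝ (Fin n) → ℝ) (hb : ContinuousOn b K)
    (δ : ℝ) (hδ : 0 < δ)
    (Q : QuadraticForm ℝ (EuclideanSpace ℝ (Fin n)))
    (hQ : ∀ u, u ≠ 0 → 0 < Q u)
    (R : ℝ → EuclideanSpace ℝ (Fin n) → Set ℝ)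
    (hR : ∀ T w, R T w =
      {t : ℝ | 0 ≤ t ∧ Real.sqrt t • w ∈ K ∧ t ≤ T + b (Real.sqrt t • w)})
    (f : ℝ → EuclideanSpace ℝ (Fin n) → ℝ)
    (hf : ∀ T u, f T u = Real.exp (-(δ * T)) * Real.exp (-(Q u) / T) *
      ∫ t in R T ((Real.sqrt T)⁻¹ • u), Real.exp (δ * t))
    (j : EuclideanSpace ℝ (Fin n) → ℝ)
    (hj : ∀ u, j u = sSup ({s ∈ Set.Icc (0 : ℝ) 1 | s • u ∈ K} ∪ {0}))
    (g : EuclideanSpace ℝ (Fin n) → ℝ)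
    (hg : ∀ u, g u = 2 * Real.sqrt (δ * Q u * (1 - (j u) ^ 2))) :
    ∀ u, u ∉ convexHull ℝ (K ∪ {0}) → ∀ T > 0,
      f T u ≤ (1 / δ) * Real.exp (-(g u)) := by
  intro u hu T hT
  have h0mem : (0 : EuclideanSpace ℝ (Fin n)) ∈ convexHull ℝ (K ∪ {0}) :=
    subset_convexHull ℝ _ (Or.inr rfl)
  have hu0 : u ≠ 0 := fun h => hu (h ▸ h0mem)
  have hQu : 0 < Q u := hQ u hu0
  have hbdd : ∀ x ∈ ({s ∈ Set.Icc (0:ℝ) 1 | s • u ∈ K} ∪ {0} : Set ℝ), x ≤ 1 := by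
    rintro x (⟨⟨_, h1⟩, _⟩ | rfl)
    · exact h1
    · norm_num
  have hc0 : 0 ≤ j u := by
    rw [hj]; exact le_csSup ⟨1, hbdd⟩ (Or.inr rfl)
  have hc1 : j u ≤ 1 := by
    rw [hj]; exact csSup_le ⟨0, Or.inr rfl⟩ hbdd
  have hd0 : (0:ℝ) ≤ (j u) ^ 2 * T := by positivity
  have hsqT : 0 < Real.sqrt T := Real.sqrt_pos.mpr hT
  -- the region is contained in [0, j(u)^2 * T]
  have hsub : R T ((Real.sqrt T)⁻¹ • u) ⊆ Set.Icc 0 ((j u) ^ 2 * T) := by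
    intro t ht
    rw [hR] at ht
    obtain ⟨ht0, htK, -⟩ := ht
    rw [smul_smul] at htK
    set s := Real.sqrt t * (Real.sqrt T)⁻¹ with hs
    have hs0 : 0 ≤ s := by positivity
    have hsle : s ≤ 1 := by
      by_contra hcon
      push_neg at hcon
      have hspos : 0 < s := lt_trans one_pos hcon
      have hinv1 : s⁻¹ ≤ 1 := by
        rw [inv_eq_one_div]
        exact (div_le_one hspos).mpr hcon.le
      have hx : s • u ∈ convexHull ℝ (K ∪ {0}) :=
        subset_convexHull ℝ _ (Or.inl htK)
      have hcomb : s⁻¹ • (s • u) + (1 - s⁻¹) • (0 : EuclideanSpace ℝ (Fin n))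
          ∈ convexHull ℝ (K ∪ {0}) :=
        (convex_convexHull ℝ (K ∪ {0})) hx h0mem (by positivity)
          (by linarith) (by ring)
      have heq : s⁻¹ • (s • u) + (1 - s⁻¹) • (0 : EuclideanSpace ℝ (Fin n)) = u := by
        rw [smul_smul, inv_mul_cancel₀ hspos.ne', one_smul, smul_zero, add_zero]
      rw [heq] at hcomb
      exact hu hcomb
    have hsc : s ≤ j u := by
      rw [hj]
      exact le_csSup ⟨1, hbdd⟩ (Or.inl ⟨⟨hs0, hsle⟩, htK⟩)
    have h1 : Real.sqrt t ≤ j u * Real.sqrt T := by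
      have : Real.sqrt t = s * Real.sqrt T := by
        rw [hs]; field_simp
      rw [this]
      exact mul_le_mul_of_nonneg_right hsc hsqT.le
    have h2 : t ≤ (j u) ^ 2 * T := by
      nlinarith [Real.sq_sqrt ht0, Real.sq_sqrt hT.le, Real.sqrt_nonneg t,
        Real.sqrt_nonneg T]
    exact ⟨ht0, h2⟩
  -- bound the integral
  have hint : IntegrableOn (fun t => Real.exp (δ * t)) (Set.Icc 0 ((j u) ^ 2 * T)) volume :=
    (Real.continuous_exp.comp (continuous_const.mul continuous_id)).integrableOn_Icc
  have hIle : (∫ t in R T ((Real.sqrt T)⁻¹ • u), Real.exp (δ * t)) ≤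
      ∫ t in Set.Icc 0 ((j u) ^ 2 * T), Real.exp (δ * t) :=
    setIntegral_mono_set hint (ae_of_all _ fun x => (Real.exp_pos _).le)
      (HasSubset.Subset.eventuallyLE hsub)
  have hIcalc : (∫ t in Set.Icc (0:ℝ) ((j u) ^ 2 * T), Real.exp (δ * t)) =
      Real.exp (δ * ((j u) ^ 2 * T)) / δ - 1 / δ := by
    rw [MeasureTheory.integral_Icc_eq_integral_Ioc,
      ← intervalIntegral.integral_of_le hd0]
    have hderiv : ∀ x ∈ Set.uIcc (0:ℝ) ((j u) ^ 2 * T),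
        HasDerivAt (fun t => Real.exp (δ * t) / δ) (Real.exp (δ * x)) x := by
      intro x _
      have h1 : HasDerivAt (fun t : ℝ => δ * t) δ x := by
        simpa using (hasDerivAt_id x).const_mul δ
      have h2 := (Real.hasDerivAt_exp (δ * x)).comp x h1
      have h3 := h2.div_const δ
      rw [mul_div_cancel_right₀ _ hδ.ne'] at h3
      exact h3
    rw [intervalIntegral.integral_eq_sub_of_hasDerivAt hderiv
      ((Real.continuous_exp.comp (continuous_const.mul continuous_id)).intervalIntegrable _ _)]
    simp
  -- AM-GM
  have hgle : g u ≤ δ * T * (1 - (j u) ^ 2) + Q u / T := by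
    rw [hg]
    set a := δ * T * (1 - (j u) ^ 2) with ha
    set bb := Q u / T with hbb
    have ha0 : 0 ≤ a := by
      have : 0 ≤ 1 - (j u) ^ 2 := by nlinarith
      positivity
    have hbb0 : 0 ≤ bb := by positivity
    have hab : δ * Q u * (1 - (j u) ^ 2) = a * bb := by
      rw [ha, hbb]; field_simp
    rw [hab, Real.sqrt_mul ha0]
    nlinarith [Real.sq_sqrt ha0, Real.sq_sqrt hbb0,
      sq_nonneg (Real.sqrt a - Real.sqrt bb), Real.sqrt_nonneg a, Real.sqrt_nonneg bb]
  -- assemble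
  rw [hf]
  have hA : 0 < Real.exp (-(δ * T)) * Real.exp (-(Q u) / T) := by positivity
  calc Real.exp (-(δ * T)) * Real.exp (-(Q u) / T) *
        ∫ t in R T ((Real.sqrt T)⁻¹ • u), Real.exp (δ * t)
      ≤ Real.exp (-(δ * T)) * Real.exp (-(Q u) / T) *
        (Real.exp (δ * ((j u) ^ 2 * T)) / δ - 1 / δ) := by
        rw [← hIcalc]; exact mul_le_mul_of_nonneg_left hIle hA.le
    _ ≤ Real.exp (-(δ * T)) * Real.exp (-(Q u) / T) *
        (Real.exp (δ * ((j u) ^ 2 * T)) / δ) := by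
        have h1δ : 0 < 1 / δ := by positivity
        exact mul_le_mul_of_nonneg_left (by linarith) hA.le
    _ = (1 / δ) * Real.exp (-(δ * T * (1 - (j u) ^ 2) + Q u / T)) := by
        have hsum : -(δ * T * (1 - (j u) ^ 2) + Q u / T) =
            (-(δ * T) + -(Q u) / T) + δ * ((j u) ^ 2 * T) := by
          field_simp; ring
        rw [hsum, Real.exp_add, Real.exp_add]; ring
    _ ≤ (1 / δ) * Real.exp (-(g u)) := by
        have : Real.exp (-(δ * T * (1 - (j u) ^ 2) + Q u / T)) ≤ Real.exp (-(g u)) :=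
          Real.exp_le_exp.mpr (by linarith)
        have h1δ : (0:ℝ) ≤ 1 / δ := by positivity
        exact mul_le_mul_of_nonneg_left this h1δ
end

section
/- Let n ≥ 1 be an integer and K ⊆ ℝⁿ a compact set. For u ∈ ℝⁿ set j_u = sup({s ∈ [0,1] : s·u ∈ K} ∪ {0}). Let δ > 0 and let Q : ℝⁿ → ℝ be a positive definite quadratic form, and set g(u) = 2√(δ · Q(u) · (1 − j_u²)). Then for every u not in the convex hull of K ∪ {0}: (i) t·u ∉ K for all t ≥ 1; (ii) for every r ≥ 1 one has j_{r·u} = j_u / r; and consequently (iii) g(r·u) ≥ r · g(u) for all r ≥ 1. -/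
open MeasureTheory Real Filter Topology Pointwise

/-- Radial behaviour of `j_u` and `g(u)` outside the convex hull of `K ∪ {0}`. -/
theorem stmt_4 (n : ℕ) (hn : 1 ≤ n)
    (K : Set (EuclideanSpace ℝ (Fin n))) (hK : IsCompact K)
    (j : EuclideanSpace ℝ (Fin n) → ℝ)
    (hj : ∀ u, j u = sSup ({s ∈ Set.Icc (0 : ℝ) 1 | s • u ∈ K} ∪ {0}))
    (δ : ℝ) (hδ : 0 < δ)
    (Q : QuadraticForm ℝ (EuclideanSpace ℝ (Fin n)))
    (hQ : ∀ u, u ≠ 0 → 0 < Q u)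
    (g : EuclideanSpace ℝ (Fin n) → ℝ)
    (hg : ∀ u, g u = 2 * Real.sqrt (δ * Q u * (1 - (j u) ^ 2))) :
    ∀ u, u ∉ convexHull ℝ (K ∪ {0}) →
      (∀ t : ℝ, 1 ≤ t → t • u ∉ K) ∧
      (∀ r : ℝ, 1 ≤ r → j (r • u) = j u / r) ∧
      (∀ r : ℝ, 1 ≤ r → r * g u ≤ g (r • u)) := by
  intro u hu
  have hu0 : u ≠ 0 := by
    rintro rfl
    exact hu (subset_convexHull ℝ _ (Or.inr rfl))
  have h1 : ∀ t : ℝ, 1 ≤ t → t • u ∉ K := by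
    intro t ht htK
    have ht0 : 0 < t := lt_of_lt_of_le one_pos ht
    apply hu
    have h0 : (0 : EuclideanSpace ℝ (Fin n)) ∈ convexHull ℝ (K ∪ {0}) :=
      subset_convexHull ℝ _ (Or.inr rfl)
    have hKm : t • u ∈ convexHull ℝ (K ∪ {0}) := subset_convexHull ℝ _ (Or.inl htK)
    have heq : u = (1 / t) • (t • u) + (1 - 1 / t) • (0 : EuclideanSpace ℝ (Fin n)) := by
      rw [smul_zero, add_zero, smul_smul]
      rw [one_div, inv_mul_cancel₀ ht0.ne', one_smul]
    rw [heq]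
    exact (convex_convexHull ℝ _) hKm h0 (by positivity)
      (sub_nonneg.mpr (by rw [div_le_one ht0]; exact ht)) (by ring)
  have h2 : ∀ r : ℝ, 1 ≤ r → j (r • u) = j u / r := by
    intro r hr
    have hr0 : 0 < r := lt_of_lt_of_le one_pos hr
    rw [hj, hj]
    have hset : ({s ∈ Set.Icc (0 : ℝ) 1 | s • (r • u) ∈ K} ∪ {0}) =
        (1 / r) • ({s ∈ Set.Icc (0 : ℝ) 1 | s • u ∈ K} ∪ {0}) := by
      ext s
      simp only [Set.mem_union, Set.mem_setOf_eq, Set.mem_singleton_iff, Set.mem_Icc,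
        Set.mem_smul_set]
      constructor
      · rintro (⟨⟨hs0, hs1⟩, hsK⟩ | rfl)
        · rw [smul_smul] at hsK
          refine ⟨s * r, Or.inl ⟨⟨by positivity, ?_⟩, hsK⟩, by rw [smul_eq_mul]; field_simp⟩
          by_contra h
          push_neg at h
          exact h1 (s * r) h.le hsK
        · exact ⟨0, Or.inr rfl, by simp⟩
      · rintro ⟨t, ht, rfl⟩
        rcases ht with ⟨⟨ht0, ht1⟩, htK⟩ | rfl
        · left
          refine ⟨⟨by positivity, ?_⟩, ?_⟩
          · have h := mul_le_mul_of_nonneg_right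
              (show (1:ℝ)/r ≤ 1 by rw [div_le_one hr0]; exact hr) ht0
            rw [one_mul] at h
            exact h.trans ht1
          · rw [smul_smul]
            have : 1 / r * t * r = t := by field_simp
            rw [mul_comm (1 / r * t) r, ← mul_assoc, mul_comm r (1/r), this] at *
            convert htK using 2
            rw [smul_eq_mul]; field_simp
        · right; simp
    rw [hset, Real.sSup_smul_of_nonneg (by positivity), smul_eq_mul, one_div,
      inv_mul_eq_div]
  refine ⟨h1, h2, ?_⟩
  intro r hr
  have hr0 : 0 < r := lt_of_lt_of_le one_pos hr
  have hQu : 0 < Q u := hQ u hu0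
  have hbdd : BddAbove ({s ∈ Set.Icc (0 : ℝ) 1 | s • u ∈ K} ∪ {0}) := by
    refine ⟨1, ?_⟩
    rintro x (⟨⟨_, hx1⟩, _⟩ | rfl)
    · exact hx1
    · exact zero_le_one
  have hj0 : 0 ≤ j u := by
    rw [hj]; exact le_csSup hbdd (Or.inr rfl)
  have hj1 : j u ≤ 1 := by
    rw [hj]
    refine csSup_le ⟨0, Or.inr rfl⟩ ?_
    rintro x (⟨⟨_, hx1⟩, _⟩ | rfl)
    · exact hx1
    · exact zero_le_one
  rw [hg, hg, h2 r hr, QuadraticMap.map_smul, smul_eq_mul]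
  have hkey : r ^ 2 * (δ * Q u * (1 - j u ^ 2)) ≤ δ * (r * r * Q u) * (1 - (j u / r) ^ 2) := by
    have heq : δ * (r * r * Q u) * (1 - (j u / r) ^ 2) = δ * Q u * (r ^ 2 - j u ^ 2) := by
      field_simp
    rw [heq]
    have hr2 : (1:ℝ) ≤ r ^ 2 := by nlinarith
    nlinarith [mul_nonneg (mul_nonneg (mul_nonneg hδ.le hQu.le) (sq_nonneg (j u)))
      (sub_nonneg.mpr hr2)]
  calc r * (2 * Real.sqrt (δ * Q u * (1 - j u ^ 2)))
      = 2 * Real.sqrt (r ^ 2 * (δ * Q u * (1 - j u ^ 2))) := by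
        rw [Real.sqrt_mul (sq_nonneg r), Real.sqrt_sq hr0.le]; ring
    _ ≤ 2 * Real.sqrt (δ * (r * r * Q u) * (1 - (j u / r) ^ 2)) := by
        exact mul_le_mul_of_nonneg_left (Real.sqrt_le_sqrt hkey) (by norm_num)
end

section
/- Let n ≥ 1 be an integer, K ⊆ ℝⁿ a compact set, δ > 0, and Q : ℝⁿ → ℝ a positive definite quadratic form. For u ∈ ℝⁿ set j_u = sup({s ∈ [0,1] : s·u ∈ K} ∪ {0}) and g(u) = 2√(δ · Q(u) · (1 − j_u²)). Then the function u ↦ e^{−g(u)} is Lebesgue integrable on the complement of the convex hull of K ∪ {0} in ℝⁿ. -/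
open MeasureTheory Real Filter Topology

/-- `(x/k)^k ≤ exp x` for `x ≥ 0`. -/
lemma aux_pow_le_exp (k : ℕ) (hk : 0 < k) {x : ℝ} (hx : 0 ≤ x) :
    (x / k) ^ k ≤ Real.exp x := by
  have hk' : (0 : ℝ) < k := by exact_mod_cast hk
  have h1 : x / k ≤ Real.exp (x / k) := by
    have := Real.add_one_le_exp (x / k)
    nlinarith [div_nonneg hx hk'.le]
  calc (x / k) ^ k ≤ (Real.exp (x / k)) ^ k :=
        pow_le_pow_left₀ (div_nonneg hx hk'.le) h1 k
    _ = Real.exp (k * (x / k)) := (Real.exp_nat_mul _ k).symm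
    _ = Real.exp x := by rw [mul_div_cancel₀ _ hk'.ne']

set_option maxHeartbeats 1000000 in
/-- Integrability of `e^{-g}` on the complement of the convex hull of `K ∪ {0}`. -/
theorem stmt_5 (n : ℕ) (hn : 1 ≤ n)
    (K : Set (EuclideanSpace ℝ (Fin n))) (hK : IsCompact K)
    (δ : ℝ) (hδ : 0 < δ)
    (Q : QuadraticForm ℝ (EuclideanSpace ℝ (Fin n)))
    (hQ : ∀ u, u ≠ 0 → 0 < Q u)
    (j : EuclideanSpace ℝ (Fin n) → ℝ)
    (hj : ∀ u, j u = sSup ({s ∈ Set.Icc (0 : ℝ) 1 | s • u ∈ K} ∪ {0}))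
    (g : EuclideanSpace ℝ (Fin n) → ℝ)
    (hg : ∀ u, g u = 2 * Real.sqrt (δ * Q u * (1 - (j u) ^ 2))) :
    IntegrableOn (fun u => Real.exp (-(g u))) ((convexHull ℝ (K ∪ {0}))ᶜ) volume := by
  classical
  set S : EuclideanSpace ℝ (Fin n) → Set ℝ := fun u => {s ∈ Set.Icc (0 : ℝ) 1 | s • u ∈ K} ∪ {0} with hS
  -- basic facts about S
  have hSsub : ∀ u, S u ⊆ Set.Icc (0 : ℝ) 1 := by
    rintro u s (⟨hs, -⟩ | rfl)
    · exact hs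
    · exact ⟨le_refl 0, zero_le_one⟩
  have hSclosed : ∀ u, IsClosed (S u) := by
    intro u
    have h1 : IsClosed {s : ℝ | s ∈ Set.Icc (0 : ℝ) 1 ∧ s • u ∈ K} := by
      have hcont : Continuous fun s : ℝ => s • u := continuous_id.smul continuous_const
      have : {s : ℝ | s ∈ Set.Icc (0 : ℝ) 1 ∧ s • u ∈ K}
          = Set.Icc (0 : ℝ) 1 ∩ (fun s : ℝ => s • u) ⁻¹' K := rfl
      rw [this]
      exact isClosed_Icc.inter (hK.isClosed.preimage hcont)
    exact h1.union isClosed_singleton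
  have hScomp : ∀ u, IsCompact (S u) :=
    fun u => isCompact_Icc.of_isClosed_subset (hSclosed u) (hSsub u)
  have hSne : ∀ u, (S u).Nonempty := fun u => ⟨0, Or.inr rfl⟩
  have hjmem : ∀ u, j u ∈ S u := by
    intro u; rw [hj u]; exact (hScomp u).sSup_mem (hSne u)
  have hj0 : ∀ u, 0 ≤ j u := fun u => (hSsub u (hjmem u)).1
  have hj1 : ∀ u, j u ≤ 1 := fun u => (hSsub u (hjmem u)).2
  -- measurability of j via upper semicontinuity
  have husc : UpperSemicontinuous j := by
    rw [upperSemicontinuous_iff_isClosed_preimage]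
    intro y
    rcases le_or_gt y 0 with hy | hy
    · have : j ⁻¹' Set.Iic y ∪ j ⁻¹' Set.Ioi y = Set.univ := by
        ext u; simp [le_or_gt]
      -- preimage of Ici y is univ
      have : j ⁻¹' Set.Ici y = Set.univ := by
        ext u; simp only [Set.mem_preimage, Set.mem_Ici, Set.mem_univ, iff_true]
        exact hy.trans (hj0 u)
      rw [this]; exact isClosed_univ
    · apply IsSeqClosed.isClosed
      intro v u hv hvu
      simp only [Set.mem_preimage, Set.mem_Ici] at hv ⊢
      -- each j (v m) • v m ∈ K
      have hmem : ∀ m, j (v m) • v m ∈ K := by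
        intro m
        rcases hjmem (v m) with ⟨-, h⟩ | h
        · exact h
        · exfalso; simp only [Set.mem_singleton_iff] at h
          have := hv m; rw [h] at this; exact absurd this (not_le.mpr hy)
      have hIcc : ∀ m, j (v m) ∈ Set.Icc y 1 := fun m => ⟨hv m, hj1 _⟩
      obtain ⟨b, hb, φ, hφ, hφt⟩ := isCompact_Icc.tendsto_subseq hIcc
      have hKb : b • u ∈ K := by
        have ht : Filter.Tendsto (fun m => j (v (φ m)) • v (φ m)) Filter.atTop (nhds (b • u)) :=
          hφt.smul (hvu.comp hφ.tendsto_atTop)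
        exact hK.isClosed.mem_of_tendsto ht (Filter.Eventually.of_forall fun m => hmem (φ m))
      have hbS : b ∈ S u := Or.inl ⟨⟨le_trans hy.le hb.1, hb.2⟩, hKb⟩
      have : b ≤ j u := by
        rw [hj u]; exact le_csSup (hScomp u).bddAbove hbS
      exact le_trans hb.1 this
  have hjm : Measurable j := husc.measurable
  -- continuity of Q
  have hQc : Continuous Q := by
    let B := QuadraticMap.associatedHom ℝ Q
    let B₁ : EuclideanSpace ℝ (Fin n) →ₗ[ℝ] (EuclideanSpace ℝ (Fin n) →L[ℝ] ℝ) :=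
      (LinearMap.toContinuousLinearMap :
        (EuclideanSpace ℝ (Fin n) →ₗ[ℝ] ℝ) ≃ₗ[ℝ] (EuclideanSpace ℝ (Fin n) →L[ℝ] ℝ)).toLinearMap.comp B
    have hB₁c : Continuous B₁ := B₁.continuous_of_finiteDimensional
    have hcont : Continuous fun x : EuclideanSpace ℝ (Fin n) => (B₁ x) x :=
      hB₁c.clm_apply continuous_id
    have hQB : ∀ x, (B₁ x) x = Q x := by
      intro x
      simp only [B₁, LinearMap.coe_comp, Function.comp_apply, LinearEquiv.coe_coe,
        LinearMap.coe_toContinuousLinearMap']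
      exact QuadraticMap.associated_eq_self_apply ℝ Q x
    have : (fun x : EuclideanSpace ℝ (Fin n) => (B₁ x) x) = Q := funext hQB
    rw [← this]
    exact hcont
  have hQm : Measurable (Q : EuclideanSpace ℝ (Fin n) → ℝ) := hQc.measurable
  -- lower bound for Q
  have hsne : (Metric.sphere (0 : EuclideanSpace ℝ (Fin n)) 1).Nonempty := by
    refine ⟨EuclideanSpace.single ⟨0, hn⟩ (1 : ℝ), ?_⟩
    simp [EuclideanSpace.norm_single]
  obtain ⟨v, hv, hmin'⟩ := (isCompact_sphere (0 : EuclideanSpace ℝ (Fin n)) 1).exists_isMinOn hsne hQc.continuousOn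
  have hmin : ∀ w ∈ Metric.sphere (0 : EuclideanSpace ℝ (Fin n)) 1, Q v ≤ Q w := fun w hw => hmin' hw
  have hv1 : ‖v‖ = 1 := by simpa using hv
  have hc : 0 < Q v := hQ v (by intro h; rw [h] at hv1; simp at hv1)
  set c := Q v with hcdef
  have hlow : ∀ u : EuclideanSpace ℝ (Fin n), c * ‖u‖ ^ 2 ≤ Q u := by
    intro u
    rcases eq_or_ne u 0 with rfl | hu
    · simp
    · have hnu : (0 : ℝ) < ‖u‖ := norm_pos_iff.mpr hu
      set w : EuclideanSpace ℝ (Fin n) := ‖u‖⁻¹ • u with hw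
      have hwsph : w ∈ Metric.sphere (0 : EuclideanSpace ℝ (Fin n)) 1 := by
        simp only [mem_sphere_iff_norm, sub_zero, hw, norm_smul, norm_inv, norm_norm]
        field_simp
      have huw : (‖u‖ : ℝ) • w = u := by
        rw [hw, smul_smul, mul_inv_cancel₀ hnu.ne', one_smul]
      have hQu : Q u = ‖u‖ * ‖u‖ * Q w := by
        conv_lhs => rw [← huw]
        rw [QuadraticMap.map_smul, smul_eq_mul]
      have := hmin w hwsph
      nlinarith [sq_nonneg ‖u‖]
  -- bound K in a closed ball
  obtain ⟨r, hr⟩ := hK.isBounded.subset_closedBall (0 : EuclideanSpace ℝ (Fin n))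
  set R : ℝ := max r 1 with hR
  have hR1 : (1 : ℝ) ≤ R := le_max_right _ _
  have hR0 : (0 : ℝ) < R := lt_of_lt_of_le one_pos hR1
  have hKR : K ⊆ Metric.closedBall (0 : EuclideanSpace ℝ (Fin n)) R :=
    hr.trans (Metric.closedBall_subset_closedBall (le_max_left _ _))
  -- small j far out
  have hjhalf : ∀ u : EuclideanSpace ℝ (Fin n), 2 * R ≤ ‖u‖ → j u ≤ 1 / 2 := by
    intro u hu
    rw [hj u]
    apply csSup_le (hSne u)
    rintro s (⟨⟨hs0, hs1⟩, hsK⟩ | rfl)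
    · have h1 : ‖s • u‖ ≤ R := by
        have := hKR hsK
        simpa [Metric.mem_closedBall] using this
      rw [norm_smul, Real.norm_eq_abs, abs_of_nonneg hs0] at h1
      nlinarith
    · norm_num
  -- decay constant
  set a : ℝ := 2 * Real.sqrt (δ * c * (3 / 4)) with ha
  have ha0 : 0 < a := by
    have : 0 < δ * c * (3 / 4) := by positivity
    have := Real.sqrt_pos.mpr this
    positivity
  have hgnn : ∀ u, 0 ≤ g u := by
    intro u; rw [hg u]; positivity
  -- g lower bound far out
  have hglb : ∀ u : EuclideanSpace ℝ (Fin n), 2 * R ≤ ‖u‖ → a * ‖u‖ ≤ g u := by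
    intro u hu
    have h1 : j u ≤ 1 / 2 := hjhalf u hu
    have h2 : (3 / 4 : ℝ) ≤ 1 - j u ^ 2 := by nlinarith [hj0 u]
    have hQu : c * ‖u‖ ^ 2 ≤ Q u := hlow u
    have hQnn : 0 ≤ Q u := le_trans (by positivity) hQu
    have e1 : δ * (c * ‖u‖ ^ 2) ≤ δ * Q u := mul_le_mul_of_nonneg_left hQu hδ.le
    have h3 : δ * c * (3 / 4) * ‖u‖ ^ 2 ≤ δ * Q u * (1 - j u ^ 2) := by
      calc δ * c * (3 / 4) * ‖u‖ ^ 2 = δ * (c * ‖u‖ ^ 2) * (3 / 4) := by ring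
        _ ≤ δ * Q u * (3 / 4) := mul_le_mul_of_nonneg_right e1 (by norm_num)
        _ ≤ δ * Q u * (1 - j u ^ 2) :=
            mul_le_mul_of_nonneg_left h2 (mul_nonneg hδ.le hQnn)
    have h4 : Real.sqrt (δ * c * (3 / 4) * ‖u‖ ^ 2) ≤ Real.sqrt (δ * Q u * (1 - j u ^ 2)) :=
      Real.sqrt_le_sqrt h3
    have h5 : Real.sqrt (δ * c * (3 / 4) * ‖u‖ ^ 2)
        = Real.sqrt (δ * c * (3 / 4)) * ‖u‖ := by
      rw [Real.sqrt_mul (by positivity), Real.sqrt_sq (norm_nonneg u)]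
    rw [hg u, ha]
    calc 2 * Real.sqrt (δ * c * (3 / 4)) * ‖u‖
        = 2 * Real.sqrt (δ * c * (3 / 4) * ‖u‖ ^ 2) := by rw [h5]; ring
      _ ≤ 2 * Real.sqrt (δ * Q u * (1 - j u ^ 2)) := by linarith
  -- measurability of the integrand
  have hgm : Measurable g := by
    have h1 : Measurable fun u : EuclideanSpace ℝ (Fin n) => δ * Q u * (1 - j u ^ 2) :=
      (measurable_const.mul hQm).mul (measurable_const.sub (hjm.pow_const 2))
    have hgeq : g = fun u => 2 * Real.sqrt (δ * Q u * (1 - j u ^ 2)) := funext hg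
    rw [hgeq]
    exact (h1.sqrt).const_mul 2
  have hfm : Measurable fun u : EuclideanSpace ℝ (Fin n) => Real.exp (-(g u)) := hgm.neg.exp
  -- the dominating function
  set k : ℕ := n + 1 with hk
  have hk0 : (0 : ℝ) < k := by positivity
  set C : ℝ := max ((1 + 2 * R) ^ k) (Real.exp a * (k / a) ^ k) with hC
  have hC0 : 0 < C := lt_of_lt_of_le (by positivity) (le_max_left _ _)
  have hbd : ∀ u : EuclideanSpace ℝ (Fin n), Real.exp (-(g u)) ≤ C * (1 + ‖u‖) ^ (-(k : ℝ)) := by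
    intro u
    have h1u : (0 : ℝ) < 1 + ‖u‖ := by positivity
    have hrp : (1 + ‖u‖ : ℝ) ^ (-(k : ℝ)) = ((1 + ‖u‖) ^ k)⁻¹ := by
      rw [Real.rpow_neg h1u.le, Real.rpow_natCast]
    rcases le_or_gt ‖u‖ (2 * R) with hsmall | hbig
    · have h1 : Real.exp (-(g u)) ≤ 1 := by
        rw [Real.exp_le_one_iff]; linarith [hgnn u]
      have h2 : ((1 + 2 * R) ^ k : ℝ) ≤ C := le_max_left _ _
      have h3 : ((1 + ‖u‖) ^ k : ℝ) ≤ (1 + 2 * R) ^ k :=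
        pow_le_pow_left₀ h1u.le (by linarith) k
      rw [hrp]
      rw [← div_eq_mul_inv, le_div_iff₀ (by positivity)]
      calc Real.exp (-(g u)) * (1 + ‖u‖) ^ k ≤ 1 * (1 + 2 * R) ^ k := by
            apply mul_le_mul h1 h3 (by positivity) zero_le_one
        _ = (1 + 2 * R) ^ k := one_mul _
        _ ≤ C := h2
    · -- large norm: use exponential decay
      have h1 : Real.exp (-(g u)) ≤ Real.exp (-(a * ‖u‖)) := by
        apply Real.exp_le_exp.mpr; have := hglb u hbig.le; linarith
      have hx : (0 : ℝ) ≤ a * (1 + ‖u‖) := by positivity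
      have h2 : (a * (1 + ‖u‖) / k) ^ k ≤ Real.exp (a * (1 + ‖u‖)) :=
        aux_pow_le_exp k (by omega) hx
      have hpk : (0 : ℝ) < (a * (1 + ‖u‖) / k) ^ k := by positivity
      have h3 : Real.exp (-(a * (1 + ‖u‖))) ≤ ((a * (1 + ‖u‖) / k) ^ k)⁻¹ := by
        rw [Real.exp_neg]
        exact inv_anti₀ hpk h2
      have h4 : ((a * (1 + ‖u‖) / k) ^ k : ℝ)⁻¹
          = (k / a) ^ k * ((1 + ‖u‖) ^ k)⁻¹ := by
        rw [← inv_pow, ← inv_pow, ← mul_pow]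
        congr 1
        field_simp
      have h5 : Real.exp (-(a * ‖u‖)) = Real.exp a * Real.exp (-(a * (1 + ‖u‖))) := by
        rw [← Real.exp_add]; ring_nf
      rw [hrp]
      calc Real.exp (-(g u)) ≤ Real.exp (-(a * ‖u‖)) := h1
        _ = Real.exp a * Real.exp (-(a * (1 + ‖u‖))) := h5
        _ ≤ Real.exp a * ((k / a) ^ k * ((1 + ‖u‖) ^ k)⁻¹) := by
            rw [← h4]
            exact mul_le_mul_of_nonneg_left h3 (Real.exp_nonneg a)
        _ = (Real.exp a * (k / a) ^ k) * ((1 + ‖u‖) ^ k)⁻¹ := by ring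
        _ ≤ C * ((1 + ‖u‖) ^ k)⁻¹ := by
            apply mul_le_mul_of_nonneg_right (le_max_right _ _) (by positivity)
  -- integrability of the dominating function
  have hnr : ((Module.finrank ℝ (EuclideanSpace ℝ (Fin n)) : ℝ)) < (k : ℝ) := by
    have : Module.finrank ℝ (EuclideanSpace ℝ (Fin n)) = n := finrank_euclideanSpace_fin
    rw [this, hk]; exact_mod_cast Nat.lt_succ_self n
  have hdom : Integrable (fun u : EuclideanSpace ℝ (Fin n) => C * (1 + ‖u‖) ^ (-(k : ℝ))) volume :=
    (integrable_one_add_norm hnr).const_mul C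
  have hint : Integrable (fun u : EuclideanSpace ℝ (Fin n) => Real.exp (-(g u))) volume := by
    refine hdom.mono' hfm.aestronglyMeasurable ?_
    refine Filter.Eventually.of_forall fun u => ?_
    rw [Real.norm_eq_abs, abs_of_nonneg (Real.exp_nonneg _)]
    exact hbd u
  exact hint.integrableOn
end

section
/- Let n ≥ 1 be an integer, let v ∈ ℝⁿ be a unit vector for the Euclidean norm, let 𝖪 ⊆ ℝⁿ be a compact set, and define b : ℝⁿ → ℝ by b(u) = −⟨u, v⟩, so that u + b(u)·v is orthogonal to v. Then: (i) for every T ≥ 0, {t·v + u : u ∈ 𝖪, t ≥ 0, ‖t·v + u‖ ≤ T} ⊆ {t·v + u : u ∈ 𝖪, 0 ≤ t ≤ T + b(u)}; and (ii) for every ε′ > 0 there exists T₁ > 0 such that for all T ≥ T₁, {t·v + u : u ∈ 𝖪, 0 ≤ t ≤ T + b(u) − ε′} ⊆ {t·v + u : u ∈ 𝖪, t ≥ 0, ‖t·v + u‖ ≤ T}. -/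
open Real Filter Topology
open scoped RealInnerProductSpace

set_option maxHeartbeats 1000000 in
/-- Comparison between the norm ball intersected with the tube in direction `v`
and truncated tubes with truncation function `b(u) = -⟨u, v⟩`. -/
theorem stmt_7 (n : ℕ) (hn : 1 ≤ n)
    (v : EuclideanSpace ℝ (Fin n)) (hv : ‖v‖ = 1)
    (K : Set (EuclideanSpace ℝ (Fin n))) (hK : IsCompact K)
    (b : EuclideanSpace ℝ (Fin n) → ℝ) (hb : ∀ u, b u = -(inner ℝ u v : ℝ)) :
    (∀ T : ℝ, 0 ≤ T →
      {x | ∃ t : ℝ, ∃ u ∈ K, 0 ≤ t ∧ ‖t • v + u‖ ≤ T ∧ x = t • v + u} ⊆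
      {x | ∃ t : ℝ, ∃ u ∈ K, 0 ≤ t ∧ t ≤ T + b u ∧ x = t • v + u}) ∧
    (∀ ε' > (0 : ℝ), ∃ T₁ > (0 : ℝ), ∀ T ≥ T₁,
      {x | ∃ t : ℝ, ∃ u ∈ K, 0 ≤ t ∧ t ≤ T + b u - ε' ∧ x = t • v + u} ⊆
      {x | ∃ t : ℝ, ∃ u ∈ K, 0 ≤ t ∧ ‖t • v + u‖ ≤ T ∧ x = t • v + u}) := by
  constructor
  · rintro T hT x ⟨t, u, hu, ht, hnorm, rfl⟩
    refine ⟨t, u, hu, ht, ?_, rfl⟩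
    have h1 : (inner ℝ (t • v + u) v : ℝ) ≤ ‖t • v + u‖ * ‖v‖ := real_inner_le_norm _ _
    have h2 : (inner ℝ (t • v + u) v : ℝ) = t + (inner ℝ u v : ℝ) := by
      rw [inner_add_left, real_inner_smul_left, real_inner_self_eq_norm_sq, hv]
      ring
    rw [hb]
    rw [h2, hv, mul_one] at h1
    linarith
  · intro ε' hε'
    obtain ⟨C0, hC0⟩ := hK.isBounded.exists_norm_le
    set C : ℝ := max C0 0 with hCdef
    have hC : 0 ≤ C := le_max_right _ _
    have hCu : ∀ u ∈ K, ‖u‖ ≤ C := fun u hu => (hC0 u hu).trans (le_max_left _ _)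
    refine ⟨(C ^ 2 + ε' ^ 2) / (2 * ε') + 2 * C + ε' + 1, by positivity, ?_⟩
    rintro T hT x ⟨t, u, hu, ht, htle, rfl⟩
    refine ⟨t, u, hu, ht, ?_, rfl⟩
    set s : ℝ := inner ℝ u v with hs
    have hbu : b u = -s := hb u
    clear_value s
    rw [hbu] at htle
    have hsC : |s| ≤ C := by
      rw [hs]
      refine le_trans (abs_real_inner_le_norm u v) ?_
      rw [hv, mul_one]; exact hCu u hu
    have habs := abs_le.mp hsC
    have hnormsq : ‖t • v + u‖ ^ 2 = (t + s) ^ 2 + (‖u‖ ^ 2 - s ^ 2) := by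
      have h := norm_add_sq_real (t • v) u
      have h2 : (inner ℝ (t • v) u : ℝ) = t * s := by
        rw [real_inner_smul_left, hs, real_inner_comm]
      rw [norm_smul, hv, Real.norm_eq_abs, mul_one, abs_of_nonneg ht, h2] at h
      rw [h]; ring
    have huC : ‖u‖ ≤ C := hCu u hu
    have hu2 : ‖u‖ ^ 2 ≤ C ^ 2 := by
      have := norm_nonneg u; nlinarith
    -- bound on T implications
    have hTkey : C ^ 2 ≤ 2 * T * ε' - ε' ^ 2 := by
      have h1 : (C ^ 2 + ε' ^ 2) / (2 * ε') ≤ T := by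
        have : (C ^ 2 + ε' ^ 2) / (2 * ε') + 2 * C + ε' + 1 ≤ T := hT
        nlinarith
      have h2 : C ^ 2 + ε' ^ 2 ≤ 2 * ε' * T := by
        rw [div_le_iff₀ (by positivity)] at h1
        linarith
      linarith
    have hT2C : 2 * C ≤ T := by nlinarith [sq_nonneg C, sq_nonneg ε', div_nonneg (by positivity : (0:ℝ) ≤ C ^ 2 + ε' ^ 2) (by positivity : (0:ℝ) ≤ 2 * ε')]
    have hTpos : 0 < T := by nlinarith [div_nonneg (by positivity : (0:ℝ) ≤ C ^ 2 + ε' ^ 2) (by positivity : (0:ℝ) ≤ 2 * ε')]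
    have hts : t + s ≤ T - ε' := by linarith
    have htsge : -C ≤ t + s := by linarith
    have hNnn : (0:ℝ) ≤ ‖t • v + u‖ := norm_nonneg _
    have hUnn : (0:ℝ) ≤ ‖u‖ := norm_nonneg _
    generalize hNdef : ‖t • v + u‖ = N at hnormsq hNnn ⊢
    generalize hUdef : ‖u‖ = U at hnormsq hu2 hUnn
    have hsqle : N ^ 2 ≤ T ^ 2 := by
      rcases le_or_gt 0 (t + s) with h | h
      · -- (t+s)^2 ≤ (T-ε')^2
        have h1 : (t + s) ^ 2 ≤ (T - ε') ^ 2 := by nlinarith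
        rw [hnormsq]; nlinarith
      · have h1 : (t + s) ^ 2 ≤ C ^ 2 := by nlinarith
        rw [hnormsq]; nlinarith
    nlinarith
end

section
/- Let d ≥ 1 be an integer, let v = (v₁,…,v_d) ∈ ℝᵈ have all coordinates positive, and let ε₁,…,ε_d > 0. Let B = ∏_{i=1}^d [0, ε_i] ⊆ ℝᵈ, let F₁ = {x ∈ B : x_j = ε_j for some j} (the union of the faces of B not containing the origin) and F₂ = {x ∈ B : x_j = 0 for some j} (the union of the faces of B containing the origin). Then F₁ and F₂ have the same image under any linear projection of ℝᵈ along the line ℝ·v; equivalently: for every w₁ ∈ F₁ there exist w₂ ∈ F₂ and s ∈ ℝ with w₁ − w₂ = s·v, and for every w₂ ∈ F₂ there exist w₁ ∈ F₁ and s ∈ ℝ with w₁ − w₂ = s·v. -/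
/-- The two families of faces of the box have the same image under the
projection of `ℝᵈ` along the line `ℝ·v`. -/
theorem stmt_9 (d : ℕ) (hd : 1 ≤ d)
    (v : Fin d → ℝ) (hv : ∀ i, 0 < v i)
    (ε : Fin d → ℝ) (hε : ∀ i, 0 < ε i)
    (B F₁ F₂ : Set (Fin d → ℝ))
    (hB : B = {x | ∀ i, x i ∈ Set.Icc 0 (ε i)})
    (hF₁ : F₁ = {x ∈ B | ∃ j, x j = ε j})
    (hF₂ : F₂ = {x ∈ B | ∃ j, x j = 0}) :
    (∀ w₁ ∈ F₁, ∃ w₂ ∈ F₂, ∃ s : ℝ, w₁ - w₂ = s • v) ∧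
    (∀ w₂ ∈ F₂, ∃ w₁ ∈ F₁, ∃ s : ℝ, w₁ - w₂ = s • v) := by
  subst hB hF₁ hF₂
  have hne : (Finset.univ : Finset (Fin d)).Nonempty := by
    simpa [Finset.univ_nonempty_iff] using Fin.pos_iff_nonempty.mp hd
  constructor
  · rintro w₁ ⟨hw₁B, -⟩
    obtain ⟨j, -, hjmin⟩ := Finset.exists_min_image Finset.univ (fun i => w₁ i / v i) hne
    set s : ℝ := w₁ j / v j with hs
    have hs0 : 0 ≤ s := div_nonneg (hw₁B j).1 (hv j).le
    refine ⟨w₁ - s • v, ⟨fun i => ?_, j, ?_⟩, s, by abel⟩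
    · constructor
      · have := hjmin i (Finset.mem_univ i)
        have : s * v i ≤ w₁ i := (le_div_iff₀ (hv i)).mp this
        simpa [sub_nonneg] using this
      · have : w₁ i - s * v i ≤ w₁ i := by nlinarith [(hv i).le]
        exact le_trans (by simpa using this) (hw₁B i).2
    · simp [hs, div_mul_cancel₀ _ (hv j).ne']
  · rintro w₂ ⟨hw₂B, -⟩
    obtain ⟨j, -, hjmin⟩ := Finset.exists_min_image Finset.univ
      (fun i => (ε i - w₂ i) / v i) hne
    set s : ℝ := (ε j - w₂ j) / v j with hs
    have hs0 : 0 ≤ s := div_nonneg (by linarith [(hw₂B j).2]) (hv j).le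
    refine ⟨w₂ + s • v, ⟨fun i => ?_, j, ?_⟩, s, by abel⟩
    · constructor
      · have : 0 ≤ w₂ i + s * v i := by nlinarith [(hw₂B i).1, (hv i).le]
        simpa using this
      · have h1 := hjmin i (Finset.mem_univ i)
        have : s * v i ≤ ε i - w₂ i := (le_div_iff₀ (hv i)).mp h1
        simp only [Pi.add_apply, Pi.smul_apply, smul_eq_mul]; linarith
    · have : s * v j = ε j - w₂ j := div_mul_cancel₀ _ (hv j).ne'
      simp only [Pi.add_apply, Pi.smul_apply, smul_eq_mul]; linarith
end

section
/- Let (X, μ) be a measure space, let ℓ : X → ℝ be measurable, and let (S_T)_{T>0} be a family of measurable subsets of X, nondecreasing in T (S_{T′} ⊆ S_T whenever T′ ≤ T), each of finite μ-measure. Assume there are constants ℓ₀ > 0 and m ≤ M in ℝ such that: ℓ(x) ≥ ℓ₀ for all x ∈ ⋃_{T>0} S_T; ℓ(x) ≤ T + M for all x ∈ S_T and all T > 0; and for all 0 < T′ < T, every x ∈ S_T \ S_{T′} satisfies ℓ(x) ≥ T′ + m. Suppose that for some constants c > 0, δ > 0 and a ∈ ℝ one has lim_{T→∞} T^a e^{−δT}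 μ(S_T) = c. Then lim_{T→∞} T^{a+1} e^{−δT} ∫_{S_T} (1/ℓ(x)) dμ(x) = c. -/
open MeasureTheory Real Filter Topology

/-- Abstract asymptotic lemma: if `μ(S_T) ∼ c e^{δT} T^{-a}` and the weight `ℓ`
is comparable to `T` on `S_T` in the stated sense, then
`∫_{S_T} 1/ℓ dμ ∼ c e^{δT} T^{-(a+1)}`. -/
theorem stmt_10 {X : Type*} [MeasurableSpace X] (μ : Measure X)
    (ℓ : X → ℝ) (hℓ : Measurable ℓ)
    (S : ℝ → Set X)
    (hSm : ∀ T > (0 : ℝ), MeasurableSet (S T))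
    (hmono : ∀ T' T : ℝ, 0 < T' → T' ≤ T → S T' ⊆ S T)
    (hfin : ∀ T > (0 : ℝ), μ (S T) < ⊤)
    (ℓ₀ : ℝ) (hℓ₀ : 0 < ℓ₀) (m M : ℝ) (hmM : m ≤ M)
    (hlow : ∀ T > (0 : ℝ), ∀ x ∈ S T, ℓ₀ ≤ ℓ x)
    (hup : ∀ T > (0 : ℝ), ∀ x ∈ S T, ℓ x ≤ T + M)
    (hdiff : ∀ T' T : ℝ, 0 < T' → T' < T → ∀ x ∈ S T \ S T', T' + m ≤ ℓ x)
    (c δ a : ℝ) (hc : 0 < c) (hδ : 0 < δ)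
    (hμ : Tendsto (fun T : ℝ => T ^ a * Real.exp (-δ * T) * (μ (S T)).toReal)
      atTop (𝓝 c)) :
    Tendsto (fun T : ℝ =>
        T ^ (a + 1) * Real.exp (-δ * T) * ∫ x in S T, 1 / ℓ x ∂μ)
      atTop (𝓝 c) := by
  set φ : ℝ → ℝ := fun T => T - (2 / δ) * Real.log T with hφdef
  have hδ' : δ ≠ 0 := ne_of_gt hδ
  -- log T / T → 0
  have hlog : Tendsto (fun T : ℝ => Real.log T / T) atTop (𝓝 0) :=
    Real.isLittleO_log_id_atTop.tendsto_div_nhds_zero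
  -- eventually T/2 ≤ φ T
  have hφhalf : ∀ᶠ T in atTop, T / 2 ≤ φ T := by
    have h1 : ∀ᶠ T in atTop, Real.log T / T ≤ δ / 4 :=
      hlog.eventually (eventually_le_nhds (by positivity))
    filter_upwards [h1, eventually_gt_atTop (0 : ℝ)] with T h hT
    have hlt : Real.log T ≤ δ / 4 * T := (div_le_iff₀ hT).mp h
    have : (2 / δ) * Real.log T ≤ T / 2 := by
      calc (2 / δ) * Real.log T ≤ (2 / δ) * (δ / 4 * T) :=
            mul_le_mul_of_nonneg_left hlt (by positivity)
        _ = T / 2 := by field_simp; ring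
    simp only [hφdef]; linarith
  have hφtop : Tendsto φ atTop atTop :=
    tendsto_atTop_mono' _ hφhalf (tendsto_id.atTop_div_const two_pos)
  -- ratio helper
  have key : ∀ ψ : ℝ → ℝ, Tendsto (fun T => ψ T / T) atTop (𝓝 1) →
      Tendsto (fun T => T / ψ T) atTop (𝓝 1) := by
    intro ψ h
    have := h.inv₀ one_ne_zero
    simpa [inv_div] using this
  have hconstdiv : ∀ b : ℝ, Tendsto (fun T : ℝ => b / T) atTop (𝓝 0) := fun b =>
    Tendsto.div_atTop tendsto_const_nhds tendsto_id
  -- T/(T+M) → 1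
  have hr1 : Tendsto (fun T : ℝ => T / (T + M)) atTop (𝓝 1) := by
    apply key
    have h : Tendsto (fun T : ℝ => 1 + M / T) atTop (𝓝 (1 + 0)) :=
      tendsto_const_nhds.add (hconstdiv M)
    rw [add_zero] at h
    apply h.congr'
    filter_upwards [eventually_gt_atTop (0 : ℝ)] with T hT
    field_simp
  -- φ T / T → 1
  have hφratio : Tendsto (fun T : ℝ => φ T / T) atTop (𝓝 1) := by
    have h : Tendsto (fun T : ℝ => 1 - (2 / δ) * (Real.log T / T)) atTop
        (𝓝 (1 - (2 / δ) * 0)) :=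
      tendsto_const_nhds.sub (hlog.const_mul (2 / δ))
    rw [mul_zero, sub_zero] at h
    apply h.congr'
    filter_upwards [eventually_gt_atTop (0 : ℝ)] with T hT
    have : T ≠ 0 := ne_of_gt hT
    simp only [hφdef]
    field_simp
  -- T/(φ T + m) → 1
  have hr2 : Tendsto (fun T : ℝ => T / (φ T + m)) atTop (𝓝 1) := by
    apply key
    have h : Tendsto (fun T : ℝ => φ T / T + m / T) atTop (𝓝 (1 + 0)) :=
      hφratio.add (hconstdiv m)
    rw [add_zero] at h
    apply h.congr'
    filter_upwards [eventually_gt_atTop (0 : ℝ)] with T hT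
    field_simp
  -- T/φT → 1 and (T/φT)^a → 1
  have hr3 : Tendsto (fun T : ℝ => T / φ T) atTop (𝓝 1) := key φ hφratio
  have hr4 : Tendsto (fun T : ℝ => (T / φ T) ^ a) atTop (𝓝 1) := by
    have hcont : ContinuousAt (fun x : ℝ => x ^ a) 1 :=
      Real.continuousAt_rpow_const 1 a (Or.inl one_ne_zero)
    have := hcont.tendsto.comp hr3
    simpa [Real.one_rpow, Function.comp_def] using this
  -- integrability
  have hInt : ∀ T > (0 : ℝ), IntegrableOn (fun x => 1 / ℓ x) (S T) μ := by
    intro T hT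
    have hmeas : AEStronglyMeasurable (fun x => 1 / ℓ x) (μ.restrict (S T)) := by
      simp only [one_div]; exact hℓ.inv.aestronglyMeasurable
    refine Integrable.mono' (g := fun _ => 1 / ℓ₀)
      (integrableOn_const (hfin T hT).ne) hmeas ?_
    rw [ae_restrict_iff' (hSm T hT)]
    refine ae_of_all _ fun x hx => ?_
    have h1 : ℓ₀ ≤ ℓ x := hlow T hT x hx
    have h2 : 0 < ℓ x := lt_of_lt_of_le hℓ₀ h1
    rw [Real.norm_eq_abs, abs_of_pos (by positivity)]
    exact one_div_le_one_div_of_le hℓ₀ h1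
  -- lower bound on the integral
  have hFlow : ∀ᶠ T in atTop, (μ (S T)).toReal * (1 / (T + M)) ≤
      ∫ x in S T, 1 / ℓ x ∂μ := by
    filter_upwards [eventually_gt_atTop (0 : ℝ), eventually_gt_atTop (-M)] with T hT hTM
    have hTM' : 0 < T + M := by linarith
    have h := setIntegral_mono_on
      (integrableOn_const (hfin T hT).ne :
        IntegrableOn (fun _ => 1 / (T + M)) (S T) μ)
      (hInt T hT) (hSm T hT) (fun x hx => by
        have h1 : ℓ₀ ≤ ℓ x := hlow T hT x hx
        have h2 : 0 < ℓ x := lt_of_lt_of_le hℓ₀ h1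
        exact one_div_le_one_div_of_le h2 (hup T hT x hx))
    calc (μ (S T)).toReal * (1 / (T + M)) = ∫ _ in S T, 1 / (T + M) ∂μ := by
          rw [setIntegral_const]; simp [smul_eq_mul, Measure.real]
      _ ≤ ∫ x in S T, 1 / ℓ x ∂μ := h
  -- upper bound on the integral
  have hFup : ∀ᶠ T in atTop, (∫ x in S T, 1 / ℓ x ∂μ) ≤
      (μ (S (φ T))).toReal * (1 / ℓ₀) + (μ (S T)).toReal * (1 / (φ T + m)) := by
    filter_upwards [eventually_gt_atTop (1 : ℝ), hφtop.eventually (eventually_gt_atTop (0 : ℝ)),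
      hφtop.eventually (eventually_gt_atTop (-m))] with T hT1 hφ0 hφm
    have hT : (0 : ℝ) < T := lt_trans one_pos hT1
    have hφltT : φ T < T := by
      have hlogpos : 0 < Real.log T := Real.log_pos hT1
      have : 0 < (2 / δ) * Real.log T := by positivity
      simp only [hφdef]; linarith
    have hφm' : 0 < φ T + m := by linarith
    have hsub : S (φ T) ⊆ S T := hmono (φ T) T hφ0 hφltT.le
    have hmeasφ : MeasurableSet (S (φ T)) := hSm (φ T) hφ0
    have hmeasd : MeasurableSet (S T \ S (φ T)) := (hSm T hT).diff hmeasφ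
    have hint1 : IntegrableOn (fun x => 1 / ℓ x) (S (φ T)) μ := hInt (φ T) hφ0
    have hint2 : IntegrableOn (fun x => 1 / ℓ x) (S T \ S (φ T)) μ :=
      (hInt T hT).mono_set Set.diff_subset
    have hsplit : (∫ x in S T, 1 / ℓ x ∂μ) =
        (∫ x in S (φ T), 1 / ℓ x ∂μ) + ∫ x in S T \ S (φ T), 1 / ℓ x ∂μ := by
      rw [← setIntegral_union Set.disjoint_sdiff_right hmeasd hint1 hint2,
        Set.union_diff_cancel hsub]
    rw [hsplit]
    have hb1 : (∫ x in S (φ T), 1 / ℓ x ∂μ) ≤ (μ (S (φ T))).toReal * (1 / ℓ₀) := by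
      have h := setIntegral_mono_on hint1
        (integrableOn_const (hfin (φ T) hφ0).ne :
          IntegrableOn (fun _ => 1 / ℓ₀) (S (φ T)) μ)
        hmeasφ (fun x hx => one_div_le_one_div_of_le hℓ₀ (hlow (φ T) hφ0 x hx))
      calc (∫ x in S (φ T), 1 / ℓ x ∂μ) ≤ ∫ _ in S (φ T), 1 / ℓ₀ ∂μ := h
        _ = (μ (S (φ T))).toReal * (1 / ℓ₀) := by rw [setIntegral_const]; simp [smul_eq_mul, Measure.real]
    have hb2 : (∫ x in S T \ S (φ T), 1 / ℓ x ∂μ) ≤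
        (μ (S T)).toReal * (1 / (φ T + m)) := by
      have hfin' : μ (S T \ S (φ T)) < ⊤ :=
        lt_of_le_of_lt (measure_mono Set.diff_subset) (hfin T hT)
      have h := setIntegral_mono_on hint2
        (integrableOn_const hfin'.ne :
          IntegrableOn (fun _ => 1 / (φ T + m)) (S T \ S (φ T)) μ)
        hmeasd (fun x hx => by
          have h1 : φ T + m ≤ ℓ x := hdiff (φ T) T hφ0 hφltT x hx
          exact one_div_le_one_div_of_le hφm' h1)
      calc (∫ x in S T \ S (φ T), 1 / ℓ x ∂μ) ≤ ∫ _ in S T \ S (φ T), 1 / (φ T + m) ∂μ := h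
        _ = (μ (S T \ S (φ T))).toReal * (1 / (φ T + m)) := by
            rw [setIntegral_const]; simp [smul_eq_mul, Measure.real]
        _ ≤ (μ (S T)).toReal * (1 / (φ T + m)) := by
            apply mul_le_mul_of_nonneg_right _ (by positivity)
            exact ENNReal.toReal_mono (ne_of_lt (hfin T hT))
              (measure_mono Set.diff_subset)
    linarith
  -- limit of the lower function
  have hlower : Tendsto (fun T : ℝ => T ^ (a + 1) * Real.exp (-δ * T) *
      ((μ (S T)).toReal * (1 / (T + M)))) atTop (𝓝 c) := by
    have h := hμ.mul hr1
    rw [mul_one] at h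
    apply h.congr'
    filter_upwards [eventually_gt_atTop (0 : ℝ), eventually_gt_atTop (-M)] with T hT hTM
    have hTM' : (0 : ℝ) < T + M := by linarith
    rw [Real.rpow_add_one (ne_of_gt hT)]
    field_simp
  -- the piece coming from S (φ T) tends to 0
  have hzero : Tendsto (fun T : ℝ => T ^ (a + 1) * Real.exp (-δ * T) *
      ((μ (S (φ T))).toReal * (1 / ℓ₀))) atTop (𝓝 0) := by
    have hgφ : Tendsto (fun T : ℝ =>
        (φ T) ^ a * Real.exp (-δ * φ T) * (μ (S (φ T))).toReal) atTop (𝓝 c) :=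
      hμ.comp hφtop
    have h1T : Tendsto (fun T : ℝ => 1 / T) atTop (𝓝 0) := hconstdiv 1
    have h := (hgφ.mul (hr4.mul h1T)).mul (tendsto_const_nhds (x := 1 / ℓ₀))
    rw [mul_zero, mul_zero, zero_mul] at h
    apply h.congr'
    filter_upwards [eventually_gt_atTop (1 : ℝ),
      hφtop.eventually (eventually_gt_atTop (0 : ℝ))] with T hT1 hφ0
    have hT : (0 : ℝ) < T := lt_trans one_pos hT1
    have e1 : Real.exp (-δ * φ T) = Real.exp (-δ * T) * T ^ 2 := by
      have harg : -δ * φ T = -δ * T + 2 * Real.log T := by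
        simp only [hφdef]; field_simp; ring
      rw [harg, Real.exp_add, two_mul, Real.exp_add, Real.exp_log hT]
      ring
    have e2 : T ^ (a + 1) = T ^ a * T := Real.rpow_add_one (ne_of_gt hT) a
    have e3 : (T / φ T) ^ a = T ^ a / (φ T) ^ a := Real.div_rpow hT.le hφ0.le a
    have hφa : (0 : ℝ) < (φ T) ^ a := Real.rpow_pos_of_pos hφ0 a
    rw [e1, e2, e3]
    field_simp
  -- limit of the upper function
  have hupper : Tendsto (fun T : ℝ => T ^ (a + 1) * Real.exp (-δ * T) *
      ((μ (S (φ T))).toReal * (1 / ℓ₀) + (μ (S T)).toReal * (1 / (φ T + m))))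
      atTop (𝓝 c) := by
    have h2 : Tendsto (fun T : ℝ => T ^ (a + 1) * Real.exp (-δ * T) *
        ((μ (S T)).toReal * (1 / (φ T + m)))) atTop (𝓝 c) := by
      have h := hμ.mul hr2
      rw [mul_one] at h
      apply h.congr'
      filter_upwards [eventually_gt_atTop (0 : ℝ),
        hφtop.eventually (eventually_gt_atTop (-m))] with T hT hφm
      have hφm' : (0 : ℝ) < φ T + m := by linarith
      rw [Real.rpow_add_one (ne_of_gt hT)]
      field_simp
    have h := hzero.add h2
    rw [zero_add] at h
    apply h.congr
    intro T
    ring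
  -- squeeze
  refine tendsto_of_tendsto_of_tendsto_of_le_of_le' hlower hupper ?_ ?_
  · filter_upwards [hFlow, eventually_gt_atTop (0 : ℝ)] with T hF hT
    have hpos : 0 ≤ T ^ (a + 1) * Real.exp (-δ * T) := by positivity
    exact mul_le_mul_of_nonneg_left hF hpos
  · filter_upwards [hFup, eventually_gt_atTop (0 : ℝ)] with T hF hT
    have hpos : 0 ≤ T ^ (a + 1) * Real.exp (-δ * T) := by positivity
    exact mul_le_mul_of_nonneg_left hF hpos
end
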